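/- For every positive odd integer n, 𝔔_7(n−1) = 𝔔_13(n), where 𝔔_7(n) counts partitions of n into distinct parts congruent to ±1, ±7, ±9, ±11 (mod 30) and 𝔔_13(n) counts partitions of n into distinct parts congruent to ±1, ±9, ±11, ±13 (mod 30). -/

import Mathlib

noncomputable def countRes (δ : ℕ) (S : Finset (ZMod δ)) (n : ℕ) : ℕ :=
  Nat.card {p : n.Partition // p.parts.Nodup ∧ ∀ x ∈ p.parts, (x : ZMod δ) ∈ S}

/-- `𝔔_7(n)`: partitions of `n` into distinct parts ≡ ±1, ±7, ±9, ±11 (mod 30). -/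
noncomputable def Qf7 (n : ℕ) : ℕ :=
  countRes 30 ({1, 7, 9, 11, 19, 21, 23, 29} : Finset (ZMod 30)) n

/-- `𝔔_13(n)`: partitions of `n` into distinct parts ≡ ±1, ±9, ±11, ±13 (mod 30). -/
noncomputable def Qf13 (n : ℕ) : ℕ :=
  countRes 30 ({1, 9, 11, 13, 17, 19, 21, 29} : Finset (ZMod 30)) n

open Polynomial Finset

namespace Alladi

noncomputable section

/-- `poch m = ∏_{i=1}^m (1 - X^(30 i))` -/
def poch (m : ℕ) : Polynomial ℤ := ∏ i ∈ Finset.Ioc 0 m, (1 - X ^ (30 * i))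

/-- Gaussian binomial with base `X^30`. -/
def gb : ℕ → ℕ → Polynomial ℤ
  | 0, 0 => 1
  | 0, _ + 1 => 0
  | _ + 1, 0 => 1
  | n + 1, k + 1 => gb n (k + 1) + X ^ (30 * (n - k)) * gb n k

lemma gb_eq_zero : ∀ {n k : ℕ}, n < k → gb n k = 0
  | 0, 0, h => absurd h (by omega)
  | 0, k + 1, _ => rfl
  | n + 1, 0, h => absurd h (by omega)
  | n + 1, k + 1, h => by
      rw [gb, gb_eq_zero (by omega), gb_eq_zero (by omega), mul_zero, add_zero]

lemma gb_zero_right : ∀ n : ℕ, gb n 0 = 1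
  | 0 => rfl
  | _ + 1 => rfl

lemma gb_diag : ∀ n : ℕ, gb n n = 1
  | 0 => rfl
  | n + 1 => by rw [gb, gb_eq_zero (by omega), gb_diag n, Nat.sub_self, mul_zero, pow_zero,
      zero_add, one_mul]

/-- `gb` extended by zero to integer second argument. -/
def gbZ (n : ℕ) (k : ℤ) : Polynomial ℤ := if 0 ≤ k ∧ k ≤ n then gb n k.toNat else 0

lemma gbZ_of_neg {n : ℕ} {k : ℤ} (h : k < 0) : gbZ n k = 0 := by
  unfold gbZ; rw [if_neg]; omega

lemma gbZ_of_gt {n : ℕ} {k : ℤ} (h : (n : ℤ) < k) : gbZ n k = 0 := by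
  unfold gbZ; rw [if_neg]; omega

lemma gbZ_zero (n : ℕ) : gbZ n 0 = 1 := by simp [gbZ, gb_zero_right]

lemma gbZ_diag (n : ℕ) : gbZ n n = 1 := by simp [gbZ, gb_diag]

lemma gbZ_natCast (n k : ℕ) (h : k ≤ n) : gbZ n k = gb n k := by
  simp [gbZ, h, Int.toNat_natCast]

/-- First Pascal rule. -/
lemma gbZ_pascal1 (n : ℕ) (k : ℤ) :
    gbZ (n + 1) k = gbZ n k + X ^ (30 * ((n + 1 : ℤ) - k).toNat) * gbZ n (k - 1) := by
  rcases lt_or_ge k 0 with h | h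
  · rw [gbZ_of_neg h, gbZ_of_neg h, gbZ_of_neg (by omega), mul_zero, add_zero]
  rcases lt_or_ge (n + 1 : ℤ) k with h2 | h2
  · rw [gbZ_of_gt h2, gbZ_of_gt (by omega), gbZ_of_gt (by omega), mul_zero, add_zero]
  obtain ⟨m, rfl⟩ := Int.eq_ofNat_of_zero_le h
  have hm' : m ≤ n + 1 := by exact_mod_cast h2
  rw [gbZ_natCast (n+1) m hm']
  rcases Nat.eq_zero_or_pos m with rfl | hm
  · simp [gbZ_zero, gbZ_of_neg, gb_zero_right]
  obtain ⟨j, rfl⟩ : ∃ j, m = j + 1 := ⟨m - 1, by omega⟩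
  have hcast : ((j + 1 : ℕ) : ℤ) - 1 = ((j : ℕ) : ℤ) := by push_cast; ring
  rw [hcast, gbZ_natCast n j (by omega), gb]
  rcases Nat.lt_or_ge n (j + 1) with h3 | h3
  · rw [gb_eq_zero (by omega), gbZ_of_gt (show (n:ℤ) < ((j+1:ℕ):ℤ) by exact_mod_cast h3),
      zero_add, zero_add, show n - j = 0 by omega,
      show ((n + 1 : ℤ) - ((j + 1 : ℕ) : ℤ)).toNat = 0 by omega]
  · rw [gbZ_natCast _ _ h3]
    have he : ((n + 1 : ℤ) - ((j + 1 : ℕ) : ℤ)).toNat = n - j := by omega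
    rw [he]

/-- Second Pascal rule. -/
lemma gbZ_pascal2 : ∀ (n : ℕ) (k : ℤ),
    gbZ (n + 1) k = gbZ n (k - 1) + X ^ (30 * k.toNat) * gbZ n k := by
  intro n
  induction n with
  | zero =>
    intro k
    rcases lt_or_ge k 0 with h | h
    · rw [gbZ_of_neg h, gbZ_of_neg h, gbZ_of_neg (by omega), mul_zero, add_zero]
    rcases lt_or_ge (1 : ℤ) k with h2 | h2
    · rw [gbZ_of_gt (by exact_mod_cast h2), gbZ_of_gt (by omega), gbZ_of_gt (by omega),
        mul_zero, add_zero]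
    interval_cases k
    · rw [gbZ_zero, gbZ_zero, gbZ_of_neg (by omega)]
      norm_num
    · norm_num [gbZ, gb]
  | succ n ih =>
    intro k
    rcases lt_or_ge k 0 with h | h
    · rw [gbZ_of_neg h, gbZ_of_neg h, gbZ_of_neg (by omega), mul_zero, add_zero]
    rcases lt_or_ge (n + 2 : ℤ) k with h2 | h2
    · rw [gbZ_of_gt (by exact_mod_cast h2), gbZ_of_gt (by push_cast; omega),
        gbZ_of_gt (by push_cast; omega), mul_zero, add_zero]
    rw [gbZ_pascal1 (n+1) k]
    conv_lhs => rw [ih k, ih (k-1)]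
    conv_rhs => rw [gbZ_pascal1 n k, gbZ_pascal1 n (k-1)]
    have he : ((↑(n + 1) + 1 : ℤ) - k).toNat = ((↑n + 1 : ℤ) - (k - 1)).toNat := by
      push_cast; omega
    rw [he]
    rcases lt_or_ge (k - 1) 0 with hb | hb
    · rw [gbZ_of_neg hb]
      ring
    rcases lt_or_ge (n : ℤ) (k - 1) with hb2 | hb2
    · rw [gbZ_of_gt hb2]
      ring
    -- now gbZ n (k-1) may be nonzero; exponents combine to 30*(n+1) on both sides
    have c1 : (X : Polynomial ℤ) ^ (30 * ((↑n + 1 : ℤ) - (k - 1)).toNat) *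
        (X ^ (30 * (k - 1).toNat) * gbZ n (k - 1)) = X ^ (30 * (n + 1)) * gbZ n (k - 1) := by
      rw [← mul_assoc, ← pow_add]
      congr 2
      omega
    have c2 : (X : Polynomial ℤ) ^ (30 * k.toNat) *
        (X ^ (30 * ((↑n + 1 : ℤ) - k).toNat) * gbZ n (k - 1)) =
        X ^ (30 * (n + 1)) * gbZ n (k - 1) := by
      rw [← mul_assoc, ← pow_add]
      congr 2
      omega
    linear_combination c1 - c2

/-- Double Pascal rule. -/
lemma gbZ_double (n : ℕ) (k : ℤ) :
    gbZ (n + 2) k = X ^ (30 * k.toNat) * gbZ n k + (1 + X ^ (30 * (n + 1))) * gbZ n (k - 1) +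
      X ^ (30 * ((n + 2 : ℤ) - k).toNat) * gbZ n (k - 2) := by
  have he : ((↑(n + 1) + 1 : ℤ) - k).toNat = ((n + 2 : ℤ) - k).toNat := by push_cast; omega
  rw [show n + 2 = (n + 1) + 1 from rfl, gbZ_pascal1 (n+1) k, he,
    gbZ_pascal2 n k, gbZ_pascal2 n (k-1), show k - 1 - 1 = k - 2 by ring]
  rcases lt_or_ge (k - 1) 0 with hb | hb
  · rw [gbZ_of_neg hb]
    ring
  rcases lt_or_ge (n : ℤ) (k - 1) with hb2 | hb2
  · rw [gbZ_of_gt hb2]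
    ring
  have c1 : (X : Polynomial ℤ) ^ (30 * ((n + 2 : ℤ) - k).toNat) *
      (X ^ (30 * (k - 1).toNat) * gbZ n (k - 1)) = X ^ (30 * (n + 1)) * gbZ n (k - 1) := by
    rw [← mul_assoc, ← pow_add]
    congr 2
    omega
  linear_combination c1

lemma poch_succ (s : ℕ) : poch (s + 1) = poch s * (1 - X ^ (30 * (s + 1))) :=
  Finset.prod_Ioc_succ_top (by omega) _

lemma Ioc_insert (k m : ℕ) (h : k + 1 ≤ m) :
    Finset.Ioc k m = insert (k+1) (Finset.Ioc (k+1) m) := by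
  ext x
  simp only [Finset.mem_Ioc, Finset.mem_insert]
  omega

/-- Product formula: `poch (m-j) * gb m j = ∏_{i=j+1}^m (1 - X^(30 i))`. -/
lemma gb_poch : ∀ m j : ℕ, j ≤ m →
    poch (m - j) * gb m j = ∏ i ∈ Finset.Ioc j m, (1 - X ^ (30 * i)) := by
  intro m
  induction m with
  | zero =>
    intro j hj
    interval_cases j
    simp [poch, gb]
  | succ m ih =>
    intro j hj
    match j with
    | 0 => simp [poch, gb_zero_right]
    | k + 1 =>
      rcases Nat.lt_or_ge k m with hk | hk
      · -- k + 1 ≤ m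
        have hk1 : k + 1 ≤ m := hk
        rw [gb]
        have hsub : m + 1 - (k + 1) = (m - (k+1)) + 1 := by omega
        rw [hsub, poch_succ, show 30 * ((m - (k+1)) + 1) = 30 * (m - k) by omega]
        have IH1 := ih (k+1) hk1
        have IH2 := ih k (by omega)
        have hioc : ∏ i ∈ Finset.Ioc k m, ((1:Polynomial ℤ) - X ^ (30 * i)) =
            (1 - X ^ (30 * (k+1))) * ∏ i ∈ Finset.Ioc (k+1) m, (1 - X ^ (30 * i)) := by
          rw [Ioc_insert k m hk1, Finset.prod_insert (by simp)]
        rw [hioc] at IH2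
        have hmk : m - k = (m - (k+1)) + 1 := by omega
        have hpoch : poch (m - k) = poch (m - (k+1)) * (1 - X ^ (30 * (m - k))) := by
          conv_lhs => rw [hmk]
          rw [poch_succ, show 30 * ((m - (k+1)) + 1) = 30 * (m - k) by omega]
        rw [hpoch] at IH2
        have hR : ∏ i ∈ Finset.Ioc (k+1) (m+1), ((1:Polynomial ℤ) - X ^ (30 * i)) =
            (∏ i ∈ Finset.Ioc (k+1) m, (1 - X ^ (30 * i))) * (1 - X ^ (30 * (m+1))) :=
          Finset.prod_Ioc_succ_top (by omega) _
        rw [hR]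
        have hAB : (X : Polynomial ℤ) ^ (30 * (m - k)) * X ^ (30 * (k+1)) = X ^ (30 * (m+1)) := by
          rw [← pow_add]
          congr 1
          omega
        linear_combination (1 - X ^ (30 * (m - k))) * IH1 + X ^ (30 * (m - k)) * IH2 -
          (∏ i ∈ Finset.Ioc (k+1) m, ((1:Polynomial ℤ) - X ^ (30 * i))) * hAB
      · -- k ≥ m, so j = m + 1
        have : k = m := by omega
        subst this
        rw [Nat.sub_self, gb_diag]
        simp [poch]

/-- Exponent `15k² + ck` as a natural number. -/
def en (c k : ℤ) : ℕ := (15 * k ^ 2 + c * k).toNat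

lemma en_nonneg {c : ℤ} (hc0 : 0 ≤ c) (hc : c ≤ 15) (k : ℤ) : 0 ≤ 15 * k ^ 2 + c * k := by
  rcases le_or_gt 0 k with h | h
  · positivity
  · nlinarith [mul_nonneg (by omega : (0:ℤ) ≤ -k) (by omega : (0:ℤ) ≤ -(k+1))]

lemma en_cast {c : ℤ} (hc0 : 0 ≤ c) (hc : c ≤ 15) (k : ℤ) :
    (en c k : ℤ) = 15 * k ^ 2 + c * k := Int.toNat_of_nonneg (en_nonneg hc0 hc k)

/-- Finite product side. -/
def CL (r n : ℕ) : Polynomial ℤ :=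
  ∏ i ∈ Finset.range n, ((1 + X ^ (30 * i + r)) * (1 + X ^ (30 * i + (30 - r))))

/-- Finite theta-sum side. -/
def CR (r n : ℕ) : Polynomial ℤ :=
  ∑ k ∈ Finset.Icc (-(n:ℤ)) n, X ^ en (15 - (r:ℤ)) k * gbZ (2 * n) ((n:ℤ) + k)

lemma sum_shift_up (a b : ℤ) (f : ℤ → Polynomial ℤ) :
    ∑ k ∈ Finset.Icc a b, f k = ∑ j ∈ Finset.Icc (a + 1) (b + 1), f (j - 1) := by
  rw [← Finset.map_add_right_Icc a b 1, Finset.sum_map]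
  simp

lemma sum_shift_down (a b : ℤ) (f : ℤ → Polynomial ℤ) :
    ∑ k ∈ Finset.Icc a b, f k = ∑ j ∈ Finset.Icc (a - 1) (b - 1), f (j + 1) := by
  have h := sum_shift_up (a - 1) (b - 1) (fun k => f (k + 1))
  rw [show a - 1 + 1 = a by ring, show b - 1 + 1 = b by ring] at h
  simp only [sub_add_cancel] at h
  exact h.symm

lemma cauchy_step (r n : ℕ) (h1 : 1 ≤ r) (h2 : r ≤ 14) :
    CR r (n + 1) = CR r n * ((1 + X ^ (30 * n + r)) * (1 + X ^ (30 * n + (30 - r)))) := by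
  have hc0 : (0:ℤ) ≤ 15 - (r:ℤ) := by omega
  have hc15 : (15 - (r:ℤ)) ≤ 15 := by omega
  set c : ℤ := 15 - (r:ℤ) with hcdef
  set G : ℤ → Polynomial ℤ := fun j => gbZ (2 * n) ((n:ℤ) + j) with hGdef
  -- expand the left side via the double Pascal rule
  have hL : CR r (n + 1) = ∑ k ∈ Finset.Icc (-(n:ℤ) - 1) ((n:ℤ) + 1),
      (X ^ en c k * (X ^ (30 * ((n:ℤ) + 1 + k).toNat) * gbZ (2 * n) ((n:ℤ) + 1 + k))
      + X ^ en c k * ((1 + X ^ (30 * (2 * n + 1))) * gbZ (2 * n) ((n:ℤ) + k))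
      + X ^ en c k * (X ^ (30 * (((n:ℤ) + 1) - k).toNat) * gbZ (2 * n) ((n:ℤ) + k - 1))) := by
    unfold CR
    rw [show (-(((n+1):ℕ):ℤ)) = -(n:ℤ) - 1 by push_cast; ring,
      show (((n+1):ℕ):ℤ) = (n:ℤ) + 1 by push_cast; ring]
    refine Finset.sum_congr rfl fun k _ => ?_
    have hd := gbZ_double (2 * n) ((n:ℤ) + 1 + k)
    rw [show 2 * (n + 1) = 2 * n + 2 by ring, hd,
      show ((n:ℤ) + 1 + k) - 1 = (n:ℤ) + k by ring,
      show ((n:ℤ) + 1 + k) - 2 = (n:ℤ) + k - 1 by ring,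
      show ((↑(2*n) + 2 : ℤ)) - ((n:ℤ) + 1 + k) = ((n:ℤ) + 1) - k by push_cast; ring]
    ring
  rw [hL, Finset.sum_add_distrib, Finset.sum_add_distrib]
  -- Term 1
  have hT1 : ∑ k ∈ Finset.Icc (-(n:ℤ) - 1) ((n:ℤ) + 1),
      X ^ en c k * (X ^ (30 * ((n:ℤ) + 1 + k).toNat) * gbZ (2 * n) ((n:ℤ) + 1 + k)) =
      ∑ j ∈ Finset.Icc (-(n:ℤ)) n, X ^ (en c j + (30 * n + r)) * G j := by
    rw [sum_shift_up]
    rw [show (-(n:ℤ) - 1 + 1) = -(n:ℤ) by ring]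
    rw [← Finset.sum_subset (Finset.Icc_subset_Icc le_rfl (by omega : (n:ℤ) ≤ (n:ℤ) + 1 + 1))]
    · refine Finset.sum_congr rfl fun j hj => ?_
      simp only [Finset.mem_Icc] at hj
      rw [show ((n:ℤ) + 1 + (j - 1)) = (n:ℤ) + j by ring]
      have hnj : (0:ℤ) ≤ (n:ℤ) + j := by omega
      have hexp : en c (j - 1) + 30 * ((n:ℤ) + j).toNat = en c j + (30 * n + r) := by
        have : ((en c (j - 1) + 30 * ((n:ℤ) + j).toNat : ℕ) : ℤ)
            = ((en c j + (30 * n + r) : ℕ) : ℤ) := by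
          push_cast [en_cast hc0 hc15, Int.toNat_of_nonneg hnj]
          ring
        exact_mod_cast this
      rw [← hexp, pow_add, hGdef]
      ring
    · intro j hj1 hj2
      simp only [Finset.mem_Icc] at hj1 hj2
      rw [show ((n:ℤ) + 1 + (j - 1)) = (n:ℤ) + j by ring, gbZ_of_gt (by push_cast; omega)]
      ring
  -- Term 2
  have hT2 : ∑ k ∈ Finset.Icc (-(n:ℤ) - 1) ((n:ℤ) + 1),
      X ^ en c k * ((1 + X ^ (30 * (2 * n + 1))) * gbZ (2 * n) ((n:ℤ) + k)) =
      ∑ j ∈ Finset.Icc (-(n:ℤ)) n,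
        (X ^ en c j * G j + X ^ (en c j + (60 * n + 30)) * G j) := by
    rw [← Finset.sum_subset (Finset.Icc_subset_Icc (by omega : -(n:ℤ) - 1 ≤ -(n:ℤ)) (by omega : (n:ℤ) ≤ (n:ℤ) + 1))]
    · refine Finset.sum_congr rfl fun j hj => ?_
      rw [pow_add, hGdef, show 30 * (2 * n + 1) = 60 * n + 30 by ring]
      ring
    · intro j hj1 hj2
      simp only [Finset.mem_Icc] at hj1 hj2
      rcases lt_or_ge ((n:ℤ) + j) 0 with h | h
      · rw [gbZ_of_neg h]; ring
      · rw [gbZ_of_gt (by push_cast; omega)]; ring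
  -- Term 3
  have hT3 : ∑ k ∈ Finset.Icc (-(n:ℤ) - 1) ((n:ℤ) + 1),
      X ^ en c k * (X ^ (30 * (((n:ℤ) + 1) - k).toNat) * gbZ (2 * n) ((n:ℤ) + k - 1)) =
      ∑ j ∈ Finset.Icc (-(n:ℤ)) n, X ^ (en c j + (30 * n + (30 - r))) * G j := by
    rw [sum_shift_down]
    rw [show ((n:ℤ) + 1 - 1) = (n:ℤ) by ring]
    rw [← Finset.sum_subset (Finset.Icc_subset_Icc (by omega : -(n:ℤ) - 1 - 1 ≤ -(n:ℤ)) le_rfl)]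
    · refine Finset.sum_congr rfl fun j hj => ?_
      simp only [Finset.mem_Icc] at hj
      rw [show ((n:ℤ) + (j + 1) - 1) = (n:ℤ) + j by ring,
        show ((n:ℤ) + 1 - (j + 1)) = (n:ℤ) - j by ring]
      have hnj : (0:ℤ) ≤ (n:ℤ) - j := by omega
      have hexp : en c (j + 1) + 30 * ((n:ℤ) - j).toNat = en c j + (30 * n + (30 - r)) := by
        have : ((en c (j + 1) + 30 * ((n:ℤ) - j).toNat : ℕ) : ℤ)
            = ((en c j + (30 * n + (30 - r)) : ℕ) : ℤ) := by
          push_cast [en_cast hc0 hc15, Int.toNat_of_nonneg hnj, (by omega : r ≤ 30)]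
          ring
        exact_mod_cast this
      rw [← hexp, pow_add, hGdef]
      ring
    · intro j hj1 hj2
      simp only [Finset.mem_Icc] at hj1 hj2
      rw [show ((n:ℤ) + (j + 1) - 1) = (n:ℤ) + j by ring, gbZ_of_neg (by omega)]
      ring
  rw [hT1, hT2, hT3]
  unfold CR
  rw [Finset.sum_mul]
  rw [← Finset.sum_add_distrib, ← Finset.sum_add_distrib]
  refine Finset.sum_congr rfl fun j hj => ?_
  have hAB : (X : Polynomial ℤ) ^ (30 * n + r) * X ^ (30 * n + (30 - r)) = X ^ (60 * n + 30) := by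
    rw [← pow_add]
    congr 1
    omega
  rw [pow_add, pow_add, pow_add]
  linear_combination (-(X ^ en c j * G j)) * hAB

theorem cauchy (r : ℕ) (h1 : 1 ≤ r) (h2 : r ≤ 14) : ∀ n, CL r n = CR r n := by
  intro n
  induction n with
  | zero =>
    unfold CL CR
    simp [en, gbZ_zero]
  | succ n ih =>
    rw [show CL r (n+1) = CL r n * ((1 + X ^ (30 * n + r)) * (1 + X ^ (30 * n + (30 - r)))) from
      Finset.prod_range_succ _ n, ih, ← cauchy_step r n h1 h2]

/-- Congruence mod `X^(N+1)`. -/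
def Cong (N : ℕ) (A B : Polynomial ℤ) : Prop := (X : Polynomial ℤ) ^ (N + 1) ∣ (A - B)

lemma cong_refl (N : ℕ) (A : Polynomial ℤ) : Cong N A A := by simp [Cong]

lemma cong_symm {N : ℕ} {A B : Polynomial ℤ} (h : Cong N A B) : Cong N B A := by
  rw [Cong, show B - A = -(A - B) by ring]
  exact h.neg_right

lemma cong_mul {N : ℕ} {A B C D : Polynomial ℤ} (h1 : Cong N A B) (h2 : Cong N C D) :
    Cong N (A * C) (B * D) := by
  have h : A * C - B * D = (A - B) * C + B * (C - D) := by ring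
  rw [Cong, h]
  exact dvd_add (h1.mul_right C) (h2.mul_left B)

lemma cong_coeff {N : ℕ} {A B : Polynomial ℤ} (h : Cong N A B) {i : ℕ} (hi : i ≤ N) :
    A.coeff i = B.coeff i := by
  obtain ⟨C, hC⟩ := h
  have h2 : (A - B).coeff i = 0 := by
    rw [hC, mul_comm, Polynomial.coeff_mul_X_pow', if_neg (by omega)]
  rw [Polynomial.coeff_sub] at h2
  linarith

lemma cong_one_prod {N : ℕ} {α : Type*} (s : Finset α) (f : α → Polynomial ℤ)
    (h : ∀ i ∈ s, Cong N (f i) 1) : Cong N (∏ i ∈ s, f i) 1 := by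
  classical
  induction s using Finset.induction_on with
  | empty => simp [cong_refl]
  | @insert a s' hx ih =>
    rw [Finset.prod_insert hx]
    have := cong_mul (h a (Finset.mem_insert_self a s'))
      (ih fun i hi => h i (Finset.mem_insert_of_mem hi))
    simpa using this

lemma poch_cong {N M s : ℕ} (hMs : M ≤ s) (hN : N < 30 * (M + 1)) :
    Cong N (poch s) (poch M) := by
  have hsplit : poch M * ∏ i ∈ Finset.Ioc M s, (1 - X ^ (30 * i)) = poch s :=
    Finset.prod_Ioc_consecutive _ (Nat.zero_le M) hMs
  have hone : Cong N (∏ i ∈ Finset.Ioc M s, ((1:Polynomial ℤ) - X ^ (30 * i))) 1 := by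
    apply cong_one_prod
    intro i hi
    simp only [Finset.mem_Ioc] at hi
    show (X : Polynomial ℤ) ^ (N+1) ∣ (1 - X ^ (30*i) - 1)
    rw [show (1 : Polynomial ℤ) - X ^ (30*i) - 1 = -(X ^ (30*i)) by ring]
    exact (pow_dvd_pow X (by omega)).neg_right
  have := cong_mul (cong_refl N (poch M)) hone
  rw [hsplit, mul_one] at this
  exact this

lemma poch_gb_cong {N M m j : ℕ} (hN : N < 30 * (M + 1)) (hjm : j ≤ m)
    (hMj : M ≤ j) (hMmj : M ≤ m - j) : Cong N (poch M * gb m j) 1 := by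
  have h2 : Cong N (poch (m - j) * gb m j) 1 := by
    rw [gb_poch m j hjm]
    apply cong_one_prod
    intro i hi
    simp only [Finset.mem_Ioc] at hi
    show (X : Polynomial ℤ) ^ (N+1) ∣ (1 - X ^ (30*i) - 1)
    rw [show (1 : Polynomial ℤ) - X ^ (30*i) - 1 = -(X ^ (30*i)) by ring]
    exact (pow_dvd_pow X (by omega)).neg_right
  have h1 : Cong N (poch M) (poch (m - j)) := cong_symm (poch_cong hMmj hN)
  show (X : Polynomial ℤ) ^ (N+1) ∣ poch M * gb m j - 1
  have hsplit : poch M * gb m j - 1 =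
      (poch M - poch (m - j)) * gb m j + (poch (m - j) * gb m j - 1) := by ring
  rw [hsplit]
  exact dvd_add (h1.mul_right _) h2

/-- Theta sum. -/
def Th (c : ℤ) (J : ℕ) : Polynomial ℤ := ∑ k ∈ Finset.Icc (-(J:ℤ)) J, X ^ en c k

lemma en_lower {c k : ℤ} (h1 : 1 ≤ c) (h2 : c ≤ 14) : k ≤ 15 * k ^ 2 + c * k ∧
    -k ≤ 15 * k ^ 2 + c * k := by
  constructor
  · have := en_nonneg (c := c - 1) (by omega) (by omega) k
    nlinarith
  · have := en_nonneg (c := c + 1) (by omega) (by omega) k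
    nlinarith

lemma en_big {c k : ℤ} {n : ℕ} (h1 : 1 ≤ c) (h2 : c ≤ 14)
    (hk : k < -(n:ℤ) ∨ (n:ℤ) < k) : n + 1 ≤ en c k := by
  have hcast := en_cast (by omega : (0:ℤ) ≤ c) (by omega : c ≤ 15) k
  have hl := en_lower h1 h2 (k := k)
  have : ((n:ℤ)) + 1 ≤ (en c k : ℤ) := by
    rcases hk with h | h
    · omega
    · omega
  exact_mod_cast this

lemma gbZ_eq_gb {m : ℕ} {z : ℤ} (h0 : 0 ≤ z) (h1 : z ≤ m) : gbZ m z = gb m z.toNat :=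
  if_pos ⟨h0, h1⟩

/-- Key congruence: `poch n · (finite product) ≡ Θ` mod `X^(n+1)`. -/
lemma key1 (r n : ℕ) (h1 : 1 ≤ r) (h2 : r ≤ 14) :
    Cong n (poch n * CL r (2 * n + 1)) (Th (15 - (r:ℤ)) n) := by
  have hc1 : (1:ℤ) ≤ 15 - (r:ℤ) := by omega
  have hc14 : (15 - (r:ℤ)) ≤ 14 := by omega
  rw [cauchy r h1 h2 (2 * n + 1)]
  unfold CR Th
  rw [Finset.mul_sum]
  have hsub : Finset.Icc (-(n:ℤ)) n ⊆ Finset.Icc (-((2*n+1 : ℕ):ℤ)) ((2*n+1 : ℕ):ℤ) := by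
    apply Finset.Icc_subset_Icc <;> push_cast <;> omega
  rw [show (∑ k ∈ Finset.Icc (-(n:ℤ)) n, (X : Polynomial ℤ) ^ en (15 - (r:ℤ)) k) =
      ∑ k ∈ Finset.Icc (-((2*n+1 : ℕ):ℤ)) ((2*n+1 : ℕ):ℤ),
        (if k ∈ Finset.Icc (-(n:ℤ)) n then (X : Polynomial ℤ) ^ en (15 - (r:ℤ)) k else 0) from by
    rw [Finset.sum_ite_mem, Finset.inter_eq_right.mpr hsub]]
  rw [Cong, ← Finset.sum_sub_distrib]
  apply Finset.dvd_sum
  intro k hk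
  simp only [Finset.mem_Icc] at hk
  by_cases hks : k ∈ Finset.Icc (-(n:ℤ)) n
  · rw [if_pos hks]
    simp only [Finset.mem_Icc] at hks
    have hz0 : (0:ℤ) ≤ ((2*n+1 : ℕ):ℤ) + k := by push_cast; omega
    have hz1 : ((2*n+1 : ℕ):ℤ) + k ≤ (2 * (2*n+1) : ℕ) := by push_cast; omega
    rw [gbZ_eq_gb hz0 hz1]
    have hcong := poch_gb_cong (N := n) (M := n) (m := 2 * (2*n+1))
      (j := (((2*n+1 : ℕ):ℤ) + k).toNat) (by omega) (by omega) (by omega) (by omega)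
    rw [show poch n * (X ^ en (15 - (r:ℤ)) k * gb (2*(2*n+1)) ((((2*n+1:ℕ):ℤ) + k).toNat)) -
        X ^ en (15 - (r:ℤ)) k =
        X ^ en (15 - (r:ℤ)) k *
          (poch n * gb (2*(2*n+1)) ((((2*n+1:ℕ):ℤ) + k).toNat) - 1) by ring]
    exact (hcong).mul_left _
  · rw [if_neg hks, sub_zero]
    simp only [Finset.mem_Icc, not_and_or, not_le] at hks
    have hbig : n + 1 ≤ en (15 - (r:ℤ)) k := en_big hc1 hc14 (by omega)
    rw [show poch n * (X ^ en (15 - (r:ℤ)) k * gbZ (2*(2*n+1)) (((2*n+1:ℕ):ℤ) + k)) =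
        X ^ en (15 - (r:ℤ)) k * (poch n * gbZ (2*(2*n+1)) (((2*n+1:ℕ):ℤ) + k)) by ring]
    exact Dvd.dvd.mul_right (pow_dvd_pow X hbig) _

lemma coeff_sum_monomials {α : Type*} (s : Finset α) (e : α → ℕ) (i : ℕ) :
    (∑ a ∈ s, (X : Polynomial ℤ) ^ e a).coeff i = (s.filter (fun a => e a = i)).card := by
  classical
  rw [Polynomial.finset_sum_coeff]
  rw [Finset.card_filter]
  push_cast
  refine Finset.sum_congr rfl fun a _ => ?_
  rw [Polynomial.coeff_X_pow]
  simp [eq_comm]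

lemma sum_X_mul_sum_X {α β : Type*} (s : Finset α) (t : Finset β) (e : α → ℕ) (f : β → ℕ) :
    ((∑ a ∈ s, (X : Polynomial ℤ) ^ e a) * (∑ b ∈ t, X ^ f b)) =
      ∑ p ∈ s ×ˢ t, X ^ (e p.1 + f p.2) := by
  rw [Finset.sum_mul_sum, Finset.sum_product]
  exact Finset.sum_congr rfl fun a _ => Finset.sum_congr rfl fun b _ => (pow_add X _ _).symm

/-- The box of 4-tuples. -/
def box (J : ℕ) : Finset (ℤ × ℤ × ℤ × ℤ) :=
  (Finset.Icc (-(J:ℤ)) J) ×ˢ (Finset.Icc (-(J:ℤ)) J) ×ˢ (Finset.Icc (-(J:ℤ)) J) ×ˢ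
    (Finset.Icc (-(J:ℤ)) J)

def E4 (c4 : ℤ) (v : ℤ × ℤ × ℤ × ℤ) : ℕ :=
  en 14 v.1 + (en 6 v.2.1 + (en 4 v.2.2.1 + en c4 v.2.2.2))

lemma prod4 (c4 : ℤ) (J : ℕ) :
    Th 14 J * Th 6 J * Th 4 J * Th c4 J = ∑ v ∈ box J, (X : Polynomial ℤ) ^ E4 c4 v := by
  unfold Th box E4
  rw [mul_assoc, mul_assoc, sum_X_mul_sum_X, sum_X_mul_sum_X, sum_X_mul_sum_X]

lemma en_decomp (c k : ℤ) (hc0 : 0 ≤ c) (hc15 : c ≤ 15) (hce : Even c) :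
    ∃ m : ℤ, (en c k : ℤ) = k + 2 * m := by
  obtain ⟨e, he⟩ := hce
  obtain ⟨m, hm⟩ := Int.even_mul_succ_self k
  refine ⟨15 * m + e * k - 8 * k, ?_⟩
  rw [en_cast hc0 hc15]
  linear_combination 15 * hm + k * he

lemma quad_id (a b c d w1 w2 w3 w4 : ℤ)
    (h1 : 2*w1 = -a+b+c+d-1) (h2 : 2*w2 = -a-b+c-d-1)
    (h3 : 2*w3 = -a-b-c+d-1) (h4 : 2*w4 = -a+b-c-d-1) :
    (15*w1^2+14*w1) + ((15*w2^2+6*w2) + ((15*w3^2+4*w3) + (15*w4^2+8*w4))) + 1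
      = (15*a^2+14*a) + ((15*b^2+6*b) + ((15*c^2+4*c) + (15*d^2+2*d))) := by
  have H4 : 4 * ((15*w1^2+14*w1) + ((15*w2^2+6*w2) + ((15*w3^2+4*w3) + (15*w4^2+8*w4))) + 1)
      = 4 * ((15*a^2+14*a) + ((15*b^2+6*b) + ((15*c^2+4*c) + (15*d^2+2*d)))) := by
    linear_combination (15*(2*w1 + (-a+b+c+d-1)) + 28) * h1 +
      (15*(2*w2 + (-a-b+c-d-1)) + 12) * h2 +
      (15*(2*w3 + (-a-b-c+d-1)) + 8) * h3 +
      (15*(2*w4 + (-a+b-c-d-1)) + 16) * h4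
  linarith

lemma bd_box {cc kk : ℤ} {n : ℕ} (hcc1 : 1 ≤ cc) (hcc2 : cc ≤ 14) (hle : en cc kk ≤ n) :
    -(n:ℤ) ≤ kk ∧ kk ≤ n := by
  by_contra hcon
  have := en_big hcc1 hcc2 (k := kk) (n := n) (by omega)
  omega

lemma fwd_mem (n i : ℕ) (hin : i ≤ n) (a b c d w1 w2 w3 w4 : ℤ)
    (e1 : 2*w1 = -a+b+c+d-1) (e2 : 2*w2 = -a-b+c-d-1)
    (e3 : 2*w3 = -a-b-c+d-1) (e4 : 2*w4 = -a+b-c-d-1)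
    (hi1 : 1 ≤ i)
    (hE : en 14 a + (en 6 b + (en 4 c + en 2 d)) = i) :
    (w1, w2, w3, w4) ∈ (box n).filter (fun v => E4 8 v = i - 1) := by
  have hq := quad_id a b c d w1 w2 w3 w4 e1 e2 e3 e4
  have hEa := en_cast (by norm_num : (0:ℤ) ≤ 14) (by norm_num) a
  have hEb := en_cast (by norm_num : (0:ℤ) ≤ 6) (by norm_num) b
  have hEc := en_cast (by norm_num : (0:ℤ) ≤ 4) (by norm_num) c
  have hEd := en_cast (by norm_num : (0:ℤ) ≤ 2) (by norm_num) d
  have hW1 := en_cast (by norm_num : (0:ℤ) ≤ 14) (by norm_num) w1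
  have hW2 := en_cast (by norm_num : (0:ℤ) ≤ 6) (by norm_num) w2
  have hW3 := en_cast (by norm_num : (0:ℤ) ≤ 4) (by norm_num) w3
  have hW4 := en_cast (by norm_num : (0:ℤ) ≤ 8) (by norm_num) w4
  have hEZ : (en 14 a : ℤ) + ((en 6 b : ℤ) + ((en 4 c : ℤ) + (en 2 d : ℤ))) = (i : ℤ) := by
    exact_mod_cast congrArg (Nat.cast : ℕ → ℤ) hE
  have hE7 : (en 14 w1 : ℤ) + ((en 6 w2 : ℤ) + ((en 4 w3 : ℤ) + (en 8 w4 : ℤ)))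
      = (i : ℤ) - 1 := by
    rw [hW1, hW2, hW3, hW4]
    rw [hEa, hEb, hEc, hEd] at hEZ
    linarith [hq]
  have hE7N : en 14 w1 + (en 6 w2 + (en 4 w3 + en 8 w4)) = i - 1 := by omega
  have hw1b := bd_box (cc := 14) (kk := w1) (n := n) (by norm_num) (by norm_num) (by omega)
  have hw2b := bd_box (cc := 6) (kk := w2) (n := n) (by norm_num) (by norm_num) (by omega)
  have hw3b := bd_box (cc := 4) (kk := w3) (n := n) (by norm_num) (by norm_num) (by omega)
  have hw4b := bd_box (cc := 8) (kk := w4) (n := n) (by norm_num) (by norm_num) (by omega)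
  rw [Finset.mem_filter]
  simp only [Finset.mem_filter, box, Finset.mem_product, Finset.mem_Icc, E4]
  exact ⟨⟨⟨hw1b.1, hw1b.2⟩, ⟨hw2b.1, hw2b.2⟩, ⟨hw3b.1, hw3b.2⟩, hw4b.1, hw4b.2⟩, hE7N⟩

lemma bwd_mem (n i : ℕ) (hin : i ≤ n) (a b c d w1 w2 w3 w4 : ℤ)
    (e1 : 2*w1 = -a+b+c+d-1) (e2 : 2*w2 = -a-b+c-d-1)
    (e3 : 2*w3 = -a-b-c+d-1) (e4 : 2*w4 = -a+b-c-d-1)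
    (hi1 : 1 ≤ i)
    (hE : en 14 w1 + (en 6 w2 + (en 4 w3 + en 8 w4)) = i - 1) :
    (a, b, c, d) ∈ (box n).filter (fun v => E4 2 v = i) := by
  have hq := quad_id a b c d w1 w2 w3 w4 e1 e2 e3 e4
  have hEa := en_cast (by norm_num : (0:ℤ) ≤ 14) (by norm_num) a
  have hEb := en_cast (by norm_num : (0:ℤ) ≤ 6) (by norm_num) b
  have hEc := en_cast (by norm_num : (0:ℤ) ≤ 4) (by norm_num) c
  have hEd := en_cast (by norm_num : (0:ℤ) ≤ 2) (by norm_num) d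
  have hW1 := en_cast (by norm_num : (0:ℤ) ≤ 14) (by norm_num) w1
  have hW2 := en_cast (by norm_num : (0:ℤ) ≤ 6) (by norm_num) w2
  have hW3 := en_cast (by norm_num : (0:ℤ) ≤ 4) (by norm_num) w3
  have hW4 := en_cast (by norm_num : (0:ℤ) ≤ 8) (by norm_num) w4
  have hEZ : (en 14 w1 : ℤ) + ((en 6 w2 : ℤ) + ((en 4 w3 : ℤ) + (en 8 w4 : ℤ)))
      = (i : ℤ) - 1 := by
    have hc : ((en 14 w1 + (en 6 w2 + (en 4 w3 + en 8 w4)) : ℕ) : ℤ) = ((i - 1 : ℕ) : ℤ) :=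
      congrArg _ hE
    push_cast at hc
    omega
  have hE13 : (en 14 a : ℤ) + ((en 6 b : ℤ) + ((en 4 c : ℤ) + (en 2 d : ℤ))) = (i : ℤ) := by
    rw [hEa, hEb, hEc, hEd]
    rw [hW1, hW2, hW3, hW4] at hEZ
    linarith [hq]
  have hE13N : en 14 a + (en 6 b + (en 4 c + en 2 d)) = i := by exact_mod_cast hE13
  have hab := bd_box (cc := 14) (kk := a) (n := n) (by norm_num) (by norm_num) (by omega)
  have hbb := bd_box (cc := 6) (kk := b) (n := n) (by norm_num) (by norm_num) (by omega)
  have hcb := bd_box (cc := 4) (kk := c) (n := n) (by norm_num) (by norm_num) (by omega)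
  have hdb := bd_box (cc := 2) (kk := d) (n := n) (by norm_num) (by norm_num) (by omega)
  rw [Finset.mem_filter]
  simp only [Finset.mem_filter, box, Finset.mem_product, Finset.mem_Icc, E4]
  exact ⟨⟨⟨hab.1, hab.2⟩, ⟨hbb.1, hbb.2⟩, ⟨hcb.1, hcb.2⟩, hdb.1, hdb.2⟩, hE13N⟩

/-- parity extraction: on the 13-side the coordinate sum is odd. -/
lemma parity13 {a b c d : ℤ} {i : ℕ} (hodd : Odd i)
    (hE : en 14 a + (en 6 b + (en 4 c + en 2 d)) = i) :
    ∃ u : ℤ, a + b + c + d = 2 * u + 1 := by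
  obtain ⟨ma, hma⟩ := en_decomp 14 a (by norm_num) (by norm_num) (by decide)
  obtain ⟨mb, hmb⟩ := en_decomp 6 b (by norm_num) (by norm_num) (by decide)
  obtain ⟨mc, hmc⟩ := en_decomp 4 c (by norm_num) (by norm_num) (by decide)
  obtain ⟨md, hmd⟩ := en_decomp 2 d (by norm_num) (by norm_num) (by decide)
  have hEZ : (en 14 a : ℤ) + ((en 6 b : ℤ) + ((en 4 c : ℤ) + (en 2 d : ℤ))) = (i : ℤ) := by
    exact_mod_cast congrArg (Nat.cast : ℕ → ℤ) hE
  obtain ⟨t, ht⟩ := hodd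
  have hti : (i : ℤ) = 2 * t + 1 := by exact_mod_cast ht
  exact ⟨t - ma - mb - mc - md, by omega⟩

/-- parity extraction: on the 7-side the coordinate sum is even. -/
lemma parity7 {w1 w2 w3 w4 : ℤ} {i : ℕ} (hodd : Odd i) (hi1 : 1 ≤ i)
    (hE : en 14 w1 + (en 6 w2 + (en 4 w3 + en 8 w4)) = i - 1) :
    ∃ u : ℤ, w1 + w2 + w3 + w4 = 2 * u := by
  obtain ⟨m1, hm1⟩ := en_decomp 14 w1 (by norm_num) (by norm_num) (by decide)
  obtain ⟨m2, hm2⟩ := en_decomp 6 w2 (by norm_num) (by norm_num) (by decide)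
  obtain ⟨m3, hm3⟩ := en_decomp 4 w3 (by norm_num) (by norm_num) (by decide)
  obtain ⟨m4, hm4⟩ := en_decomp 8 w4 (by norm_num) (by norm_num) (by decide)
  have hEZ : ((en 14 w1 + (en 6 w2 + (en 4 w3 + en 8 w4)) : ℕ) : ℤ) = ((i - 1 : ℕ) : ℤ) :=
    congrArg _ hE
  push_cast at hEZ
  obtain ⟨t, ht⟩ := hodd
  have hti : (i : ℤ) = 2 * t + 1 := by exact_mod_cast ht
  refine ⟨(m1 + m2 + m3 + m4) * (-1) + t, by omega⟩

/-- The lattice-point bijection: coefficients of the two theta products are shifted. -/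
lemma lattice (n : ℕ) (i : ℕ) (hodd : Odd i) (hin : i ≤ n) :
    (Th 14 n * Th 6 n * Th 4 n * Th 2 n).coeff i
      = (Th 14 n * Th 6 n * Th 4 n * Th 8 n).coeff (i - 1) := by
  have hi1 : 1 ≤ i := by obtain ⟨t, ht⟩ := hodd; omega
  rw [prod4, prod4, coeff_sum_monomials, coeff_sum_monomials]
  congr 1
  apply Finset.card_nbij'
    (i := fun v => (((-v.1+v.2.1+v.2.2.1+v.2.2.2-1)/2 : ℤ),
      ((-v.1-v.2.1+v.2.2.1-v.2.2.2-1)/2 : ℤ),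
      ((-v.1-v.2.1-v.2.2.1+v.2.2.2-1)/2 : ℤ),
      ((-v.1+v.2.1-v.2.2.1-v.2.2.2-1)/2 : ℤ)))
    (j := fun w => (((-w.1-w.2.1-w.2.2.1-w.2.2.2-2)/2 : ℤ),
      ((w.1-w.2.1-w.2.2.1+w.2.2.2)/2 : ℤ),
      ((w.1+w.2.1-w.2.2.1-w.2.2.2)/2 : ℤ),
      ((w.1-w.2.1+w.2.2.1-w.2.2.2)/2 : ℤ)))
  · rintro ⟨a, b, c, d⟩ hv
    rw [Finset.mem_coe, Finset.mem_filter] at hv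
    have hE : en 14 a + (en 6 b + (en 4 c + en 2 d)) = i := hv.2
    obtain ⟨u, hu⟩ := parity13 hodd hE
    dsimp only
    exact fwd_mem n i hin a b c d _ _ _ _ (by omega) (by omega) (by omega) (by omega) hi1 hE
  · rintro ⟨w1, w2, w3, w4⟩ hw
    rw [Finset.mem_coe, Finset.mem_filter] at hw
    have hE : en 14 w1 + (en 6 w2 + (en 4 w3 + en 8 w4)) = i - 1 := hw.2
    obtain ⟨u, hu⟩ := parity7 hodd hi1 hE
    dsimp only
    exact bwd_mem n i hin _ _ _ _ w1 w2 w3 w4 (by omega) (by omega) (by omega) (by omega) hi1 hE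
  · rintro ⟨a, b, c, d⟩ hv
    rw [Finset.mem_coe, Finset.mem_filter] at hv
    have hE : en 14 a + (en 6 b + (en 4 c + en 2 d)) = i := hv.2
    obtain ⟨u, hu⟩ := parity13 hodd hE
    dsimp only
    simp only [Prod.mk.injEq]
    refine ⟨?_, ?_, ?_, ?_⟩ <;> omega
  · rintro ⟨w1, w2, w3, w4⟩ hw
    rw [Finset.mem_coe, Finset.mem_filter] at hw
    have hE : en 14 w1 + (en 6 w2 + (en 4 w3 + en 8 w4)) = i - 1 := hw.2
    obtain ⟨u, hu⟩ := parity7 hodd hi1 hE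
    dsimp only
    simp only [Prod.mk.injEq]
    refine ⟨?_, ?_, ?_, ?_⟩ <;> omega

/-- A polynomial is "even" if all odd coefficients vanish. -/
def IsEvenPoly (A : Polynomial ℤ) : Prop := ∀ i : ℕ, Odd i → A.coeff i = 0

lemma isEvenPoly_one : IsEvenPoly 1 := by
  intro i hi
  rw [Polynomial.coeff_one]
  have : i ≠ 0 := by rintro rfl; exact (Nat.not_odd_iff_even.2 Even.zero) hi
  simp [this]

lemma isEvenPoly_mul {A B : Polynomial ℤ} (hA : IsEvenPoly A) (hB : IsEvenPoly B) :
    IsEvenPoly (A * B) := by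
  intro i hi
  rw [Polynomial.coeff_mul]
  apply Finset.sum_eq_zero
  intro p hp
  rw [Finset.HasAntidiagonal.mem_antidiagonal] at hp
  rcases Nat.even_or_odd p.1 with h1 | h1
  · have h2 : Odd p.2 := by
      rcases Nat.even_or_odd p.2 with h2 | h2
      · exact absurd hi (Nat.not_odd_iff_even.2 (hp ▸ h1.add h2))
      · exact h2
    rw [hB p.2 h2, mul_zero]
  · rw [hA p.1 h1, zero_mul]

lemma isEvenPoly_poch (m : ℕ) : IsEvenPoly (poch m) := by
  unfold poch
  induction m with
  | zero => simpa using isEvenPoly_one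
  | succ m ih =>
    rw [Finset.prod_Ioc_succ_top (Nat.zero_le _)]
    apply isEvenPoly_mul ih
    intro i hi
    rw [Polynomial.coeff_sub, Polynomial.coeff_one, Polynomial.coeff_X_pow]
    have h0 : i ≠ 0 := by rintro rfl; exact (Nat.not_odd_iff_even.2 Even.zero) hi
    have h3 : i ≠ 30 * (m+1) := by
      rintro rfl
      exact (Nat.not_odd_iff_even.2 ⟨15 * (m+1), by ring⟩) hi
    simp [h0, h3]

lemma poch_coeff_zero (m : ℕ) : (poch m).coeff 0 = 1 := by
  unfold poch
  induction m with
  | zero => simp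
  | succ m ih =>
    rw [Finset.prod_Ioc_succ_top (Nat.zero_le _), Polynomial.mul_coeff_zero, ih]
    simp

/-- Cancel an even polynomial with unit constant term from a shifted coefficient identity. -/
lemma divide_out (E A B : Polynomial ℤ) (hE0 : E.coeff 0 = 1) (hEeven : IsEvenPoly E)
    (n : ℕ) (H : ∀ i : ℕ, Odd i → i ≤ n → (E * A).coeff i = (E * B).coeff (i - 1)) :
    ∀ i : ℕ, Odd i → i ≤ n → A.coeff i = B.coeff (i - 1) := by
  intro i
  induction i using Nat.strong_induction_on with
  | _ i IH =>
    intro hodd hle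
    obtain ⟨m, rfl⟩ : ∃ m, i = m + 1 := by
      obtain ⟨t, ht⟩ := hodd
      exact ⟨2 * t, by omega⟩
    have hL : (E * A).coeff (m + 1) =
        ∑ k ∈ Finset.range (m + 2), E.coeff k * A.coeff (m + 1 - k) := by
      rw [Polynomial.coeff_mul, Finset.Nat.sum_antidiagonal_eq_sum_range_succ_mk]
    have hR : (E * B).coeff (m + 1 - 1) =
        ∑ k ∈ Finset.range (m + 1), E.coeff k * B.coeff (m - k) := by
      rw [Polynomial.coeff_mul, Finset.Nat.sum_antidiagonal_eq_sum_range_succ_mk]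
      norm_num
    have hL2 : (E * A).coeff (m + 1) =
        A.coeff (m + 1) + ∑ k ∈ Finset.range (m + 1), E.coeff (k+1) * A.coeff (m - k) := by
      rw [hL, Finset.sum_range_succ']
      simp only [Nat.sub_zero, hE0, one_mul]
      rw [add_comm]
      congr 1
      refine Finset.sum_congr rfl fun k hk => ?_
      rw [show m + 1 - (k + 1) = m - k by omega]
    have hR2 : (E * B).coeff (m + 1 - 1) =
        B.coeff m + ∑ k ∈ Finset.range m, E.coeff (k+1) * B.coeff (m - 1 - k) := by
      rw [hR, Finset.sum_range_succ']
      simp only [Nat.sub_zero, hE0, one_mul]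
      rw [add_comm]
      congr 1
      refine Finset.sum_congr rfl fun k hk => ?_
      rw [show m - (k + 1) = m - 1 - k by omega]
    have hsums : ∑ k ∈ Finset.range (m + 1), E.coeff (k+1) * A.coeff (m - k) =
        ∑ k ∈ Finset.range m, E.coeff (k+1) * B.coeff (m - 1 - k) := by
      rw [Finset.sum_range_succ]
      have hlast : E.coeff (m+1) * A.coeff (m - m) = 0 := by
        rw [hEeven (m+1) hodd, zero_mul]
      rw [hlast, add_zero]
      refine Finset.sum_congr rfl fun k hk => ?_
      simp only [Finset.mem_range] at hk
      rcases Nat.even_or_odd (k + 1) with he | ho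
      · -- k+1 even, so m - k odd and we can use the induction hypothesis
        have hmk : Odd (m - k) := by
          obtain ⟨t, ht⟩ := hodd
          obtain ⟨s, hs⟩ := he
          refine ⟨t - s, by omega⟩
        have := IH (m - k) (by omega) hmk (by omega)
        rw [this]
        congr 2
        omega
      · rw [hEeven (k+1) ho, zero_mul, zero_mul]
    have := H (m+1) hodd hle
    rw [hL2, hR2, hsums] at this
    simp only [Nat.add_sub_cancel]
    linarith

/-- The finite set of allowed parts below the bound `B` (exclusive). -/
def FS (S : Finset (ZMod 30)) (B : ℕ) : Finset ℕ :=
  (Finset.range B).filter (fun m : ℕ => m ≠ 0 ∧ ((m : ZMod 30) ∈ S))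

/-- The partition-counting / coefficient bridge. -/
lemma bridge (S : Finset (ZMod 30)) (N : ℕ) :
    (Nat.card {p : N.Partition // p.parts.Nodup ∧ ∀ x ∈ p.parts, (x : ZMod 30) ∈ S} : ℤ)
      = (∏ m ∈ FS S (N + 1), (1 + X ^ m) : Polynomial ℤ).coeff N := by
  classical
  have e : {p : N.Partition // p.parts.Nodup ∧ ∀ x ∈ p.parts, (x : ZMod 30) ∈ S}
      ≃ {T : Finset ℕ // T ∈ (FS S (N + 1)).powerset.filter (fun T => ∑ i ∈ T, i = N)} :=
    { toFun := fun p => ⟨⟨p.1.parts, p.2.1⟩, by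
        simp only [Finset.mem_filter, Finset.mem_powerset]
        refine ⟨fun x hx => ?_, ?_⟩
        · rw [Finset.mem_mk] at hx
          unfold FS
          rw [Finset.mem_filter, Finset.mem_range]
          have hpos : 0 < x := p.1.parts_pos hx
          have hres := p.2.2 x hx
          obtain ⟨t, ht⟩ := Multiset.exists_cons_of_mem hx
          have hsum := p.1.parts_sum
          rw [ht, Multiset.sum_cons] at hsum
          exact ⟨by omega, by omega, hres⟩
        · show (Multiset.map (fun x => x) p.1.parts).sum = N
          rw [Multiset.map_id']
          exact p.1.parts_sum⟩,
      invFun := fun T => ⟨⟨T.1.val, by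
          intro i hi
          have hT := T.2
          rw [Finset.mem_filter, Finset.mem_powerset] at hT
          have := hT.1 hi
          unfold FS at this
          rw [Finset.mem_filter] at this
          omega, by
          have hT := T.2
          rw [Finset.mem_filter, Finset.mem_powerset] at hT
          have h2 : (Multiset.map (fun x => x) (T.1 : Finset ℕ).val).sum = N := hT.2
          rw [Multiset.map_id'] at h2
          exact h2⟩, by
        have hT := T.2
        rw [Finset.mem_filter, Finset.mem_powerset] at hT
        refine ⟨T.1.nodup, fun x hx => ?_⟩
        have := hT.1 hx
        unfold FS at this
        rw [Finset.mem_filter] at this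
        exact this.2.2⟩,
      left_inv := fun p => by
        apply Subtype.ext
        apply Nat.Partition.ext
        rfl,
      right_inv := fun T => by
        apply Subtype.ext
        rfl }
  rw [Nat.card_congr e, Nat.card_eq_finsetCard]
  have hprod : (∏ m ∈ FS S (N + 1), ((1:Polynomial ℤ) + X ^ m))
      = ∑ T ∈ (FS S (N + 1)).powerset, (X : Polynomial ℤ) ^ (∑ i ∈ T, i) := by
    have h1 : (∏ m ∈ FS S (N + 1), ((1:Polynomial ℤ) + X ^ m))
        = ∏ m ∈ FS S (N + 1), ((X:Polynomial ℤ) ^ m + 1) := by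
      exact Finset.prod_congr rfl fun m _ => add_comm _ _
    rw [h1, Finset.prod_add]
    refine Finset.sum_congr rfl fun T hT => ?_
    rw [Finset.prod_const_one, mul_one, ← Finset.prod_pow_eq_pow_sum]
  rw [hprod, coeff_sum_monomials]

/-- extension of the product to a larger bound, mod `X^(N+1)`. -/
lemma prod_extend {F F' : Finset ℕ} {N : ℕ} (hFF : F ⊆ F')
    (h : ∀ m ∈ F', m ∉ F → N + 1 ≤ m) :
    Cong N (∏ m ∈ F', ((1:Polynomial ℤ) + X ^ m)) (∏ m ∈ F, ((1:Polynomial ℤ) + X ^ m)) := by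
  rw [← Finset.prod_sdiff hFF]
  have hone : Cong N (∏ m ∈ F' \ F, ((1:Polynomial ℤ) + X ^ m)) 1 := by
    apply cong_one_prod
    intro m hm
    rw [Finset.mem_sdiff] at hm
    show (X:Polynomial ℤ) ^ (N+1) ∣ (1 + X ^ m - 1)
    rw [show (1:Polynomial ℤ) + X ^ m - 1 = X ^ m by ring]
    exact pow_dvd_pow X (h m hm.1 hm.2)
  have := cong_mul hone (cong_refl N (∏ m ∈ F, ((1:Polynomial ℤ) + X ^ m)))
  rw [one_mul] at this
  exact this

/-- The window decomposition: the full filtered product equals a product of four `CL`s. -/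
lemma window (r1 r2 r3 r4 : ℕ) (h12 : r1 < r2) (h23 : r2 < r3) (h34 : r3 < r4)
    (h1 : 1 ≤ r1) (h4 : r4 ≤ 14) (S : Finset (ZMod 30))
    (hS : ∀ m : ℕ, ((m : ZMod 30) ∈ S) ↔ (m % 30 = r1 ∨ m % 30 = r2 ∨ m % 30 = r3 ∨
      m % 30 = r4 ∨ m % 30 = 30 - r4 ∨ m % 30 = 30 - r3 ∨ m % 30 = 30 - r2 ∨
      m % 30 = 30 - r1)) :
    ∀ bn, (∏ m ∈ FS S (30 * bn + 1), ((1:Polynomial ℤ) + X ^ m))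
      = CL r1 bn * CL r2 bn * CL r3 bn * CL r4 bn := by
  intro bn
  induction bn with
  | zero =>
    have hempty : FS S 1 = ∅ := by
      ext x
      unfold FS
      simp only [Finset.mem_filter, Finset.mem_range, Finset.notMem_empty, iff_false]
      rintro ⟨hx1, hx2, -⟩
      omega
    simp [hempty, CL]
  | succ bn ih =>
    have hsplit : FS S (30 * (bn + 1) + 1) = FS S (30 * bn + 1) ∪
        ((Finset.Ico (30 * bn + 1) (30 * bn + 31)).filter
          (fun m : ℕ => m ≠ 0 ∧ ((m : ZMod 30) ∈ S))) := by
      unfold FS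
      rw [← Finset.filter_union]
      congr 1
      rw [Finset.range_eq_Ico, show 30 * (bn + 1) + 1 = 30 * bn + 31 by omega]
      rw [Finset.range_eq_Ico, Finset.Ico_union_Ico_eq_Ico (by omega) (by omega)]
    have hdisj : Disjoint (FS S (30 * bn + 1))
        ((Finset.Ico (30 * bn + 1) (30 * bn + 31)).filter
          (fun m : ℕ => m ≠ 0 ∧ ((m : ZMod 30) ∈ S))) := by
      unfold FS
      rw [Finset.range_eq_Ico]
      exact Finset.disjoint_filter_filter (Finset.Ico_disjoint_Ico_consecutive 0 _ _)
    rw [hsplit, Finset.prod_union hdisj, ih]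
    have hW : ((Finset.Ico (30 * bn + 1) (30 * bn + 31)).filter
        (fun m : ℕ => m ≠ 0 ∧ ((m : ZMod 30) ∈ S))) =
        {30 * bn + r1, 30 * bn + r2, 30 * bn + r3, 30 * bn + r4, 30 * bn + (30 - r4),
         30 * bn + (30 - r3), 30 * bn + (30 - r2), 30 * bn + (30 - r1)} := by
      ext x
      simp only [Finset.mem_filter, Finset.mem_Ico, Finset.mem_insert, Finset.mem_singleton,
        hS x]
      omega
    rw [hW]
    rw [Finset.prod_insert (by simp only [Finset.mem_insert, Finset.mem_singleton]; omega),
      Finset.prod_insert (by simp only [Finset.mem_insert, Finset.mem_singleton]; omega),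
      Finset.prod_insert (by simp only [Finset.mem_insert, Finset.mem_singleton]; omega),
      Finset.prod_insert (by simp only [Finset.mem_insert, Finset.mem_singleton]; omega),
      Finset.prod_insert (by simp only [Finset.mem_insert, Finset.mem_singleton]; omega),
      Finset.prod_insert (by simp only [Finset.mem_insert, Finset.mem_singleton]; omega),
      Finset.prod_insert (by simp only [Finset.mem_singleton]; omega),
      Finset.prod_singleton]
    have hCL : ∀ r : ℕ, CL r (bn + 1) = CL r bn *
        ((1 + X ^ (30 * bn + r)) * (1 + X ^ (30 * bn + (30 - r)))) :=
      fun r => Finset.prod_range_succ _ bn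
    rw [hCL r1, hCL r2, hCL r3, hCL r4]
    ring

lemma hS13 : ∀ m : ℕ, ((m : ZMod 30) ∈ ({1, 9, 11, 13, 17, 19, 21, 29} : Finset (ZMod 30))) ↔
    (m % 30 = 1 ∨ m % 30 = 9 ∨ m % 30 = 11 ∨ m % 30 = 13 ∨ m % 30 = 30 - 13 ∨
     m % 30 = 30 - 11 ∨ m % 30 = 30 - 9 ∨ m % 30 = 30 - 1) := by
  intro m
  have h : m % 30 < 30 := Nat.mod_lt _ (by norm_num)
  conv_lhs => rw [← ZMod.natCast_mod m 30]
  revert h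
  generalize m % 30 = t
  intro h
  interval_cases t <;> decide

lemma hS7 : ∀ m : ℕ, ((m : ZMod 30) ∈ ({1, 7, 9, 11, 19, 21, 23, 29} : Finset (ZMod 30))) ↔
    (m % 30 = 1 ∨ m % 30 = 7 ∨ m % 30 = 9 ∨ m % 30 = 11 ∨ m % 30 = 30 - 11 ∨
     m % 30 = 30 - 9 ∨ m % 30 = 30 - 7 ∨ m % 30 = 30 - 1) := by
  intro m
  have h : m % 30 < 30 := Nat.mod_lt _ (by norm_num)
  conv_lhs => rw [← ZMod.natCast_mod m 30]
  revert h
  generalize m % 30 = t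
  intro h
  interval_cases t <;> decide

lemma FS_subset (S : Finset (ZMod 30)) {B B' : ℕ} (h : B ≤ B') : FS S B ⊆ FS S B' := by
  unfold FS
  apply Finset.filter_subset_filter
  exact Finset.range_subset_range.mpr h

lemma FS_new_big (S : Finset (ZMod 30)) {B B' : ℕ} (m : ℕ) (hm : m ∈ FS S B')
    (hm2 : m ∉ FS S B) : B ≤ m := by
  unfold FS at hm hm2
  rw [Finset.mem_filter, Finset.mem_range] at hm hm2
  obtain ⟨hmr, hmc⟩ := hm
  by_contra hc
  exact hm2 ⟨by omega, hmc⟩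

/-- Main coefficient identity. -/
theorem main_coeff (n : ℕ) (hn : 0 < n) (hodd : Odd n) :
    (Nat.card {p : n.Partition // p.parts.Nodup ∧ ∀ x ∈ p.parts,
        (x : ZMod 30) ∈ ({1, 9, 11, 13, 17, 19, 21, 29} : Finset (ZMod 30))} : ℤ)
      = (Nat.card {p : (n-1).Partition // p.parts.Nodup ∧ ∀ x ∈ p.parts,
        (x : ZMod 30) ∈ ({1, 7, 9, 11, 19, 21, 23, 29} : Finset (ZMod 30))} : ℤ) := by
  set S13 : Finset (ZMod 30) := {1, 9, 11, 13, 17, 19, 21, 29} with hS13def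
  set S7 : Finset (ZMod 30) := {1, 7, 9, 11, 19, 21, 23, 29} with hS7def
  set bn : ℕ := 2 * n + 1 with hbn
  -- the four (resp. five) key congruences
  have hk1 := key1 1 n (by norm_num) (by norm_num)
  have hk9 := key1 9 n (by norm_num) (by norm_num)
  have hk11 := key1 11 n (by norm_num) (by norm_num)
  have hk13 := key1 13 n (by norm_num) (by norm_num)
  have hk7 := key1 7 n (by norm_num) (by norm_num)
  norm_num at hk1 hk9 hk11 hk13 hk7
  set L13 : Polynomial ℤ := CL 1 bn * CL 9 bn * CL 11 bn * CL 13 bn with hL13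
  set L7 : Polynomial ℤ := CL 1 bn * CL 7 bn * CL 9 bn * CL 11 bn with hL7
  have c13 : Cong n (poch n ^ 4 * L13) (Th 14 n * Th 6 n * Th 4 n * Th 2 n) := by
    have h := cong_mul (cong_mul (cong_mul hk1 hk9) hk11) hk13
    have hre : poch n * CL 1 (2*n+1) * (poch n * CL 9 (2*n+1)) * (poch n * CL 11 (2*n+1)) *
        (poch n * CL 13 (2*n+1)) = poch n ^ 4 * L13 := by rw [hL13, hbn]; ring
    rwa [hre] at h
  have c7 : Cong n (poch n ^ 4 * L7) (Th 14 n * Th 6 n * Th 4 n * Th 8 n) := by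
    have h := cong_mul (cong_mul (cong_mul hk1 hk9) hk11) hk7
    have hre : poch n * CL 1 (2*n+1) * (poch n * CL 9 (2*n+1)) * (poch n * CL 11 (2*n+1)) *
        (poch n * CL 7 (2*n+1)) = poch n ^ 4 * L7 := by rw [hL7, hbn]; ring
    rwa [hre] at h
  have hE0 : (poch n ^ 4).coeff 0 = 1 := by
    have h4 : poch n ^ 4 = poch n * poch n * poch n * poch n := by ring
    rw [h4, Polynomial.mul_coeff_zero, Polynomial.mul_coeff_zero, Polynomial.mul_coeff_zero,
      poch_coeff_zero]
    norm_num
  have hEe : IsEvenPoly (poch n ^ 4) := by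
    have h4 : poch n ^ 4 = poch n * poch n * poch n * poch n := by ring
    rw [h4]
    exact isEvenPoly_mul (isEvenPoly_mul (isEvenPoly_mul (isEvenPoly_poch n)
      (isEvenPoly_poch n)) (isEvenPoly_poch n)) (isEvenPoly_poch n)
  have H : ∀ i : ℕ, Odd i → i ≤ n →
      (poch n ^ 4 * L13).coeff i = (poch n ^ 4 * L7).coeff (i - 1) := by
    intro i hi hin
    rw [cong_coeff c13 hin, cong_coeff c7 (le_trans (Nat.sub_le i 1) hin)]
    exact lattice n i hi hin
  have hfinal : L13.coeff n = L7.coeff (n - 1) :=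
    divide_out (poch n ^ 4) L13 L7 hE0 hEe n H n hodd le_rfl
  -- assemble the 13 side
  have h13a := bridge S13 n
  have h13ext : Cong n (∏ m ∈ FS S13 (30 * bn + 1), ((1:Polynomial ℤ) + X ^ m))
      (∏ m ∈ FS S13 (n + 1), ((1:Polynomial ℤ) + X ^ m)) := by
    apply prod_extend (FS_subset S13 (by omega))
    intro m hm hm2
    exact FS_new_big S13 m hm hm2
  have h13w := window 1 9 11 13 (by norm_num) (by norm_num) (by norm_num) (by norm_num)
    (by norm_num) S13 hS13 bn
  have h13 : (Nat.card {p : n.Partition // p.parts.Nodup ∧ ∀ x ∈ p.parts,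
      (x : ZMod 30) ∈ S13} : ℤ) = L13.coeff n := by
    rw [h13a, ← cong_coeff h13ext le_rfl, h13w]
  -- assemble the 7 side
  have h7a := bridge S7 (n - 1)
  have h7ext : Cong (n - 1) (∏ m ∈ FS S7 (30 * bn + 1), ((1:Polynomial ℤ) + X ^ m))
      (∏ m ∈ FS S7 (n - 1 + 1), ((1:Polynomial ℤ) + X ^ m)) := by
    apply prod_extend (FS_subset S7 (by omega))
    intro m hm hm2
    exact FS_new_big S7 m hm hm2
  have h7w := window 1 7 9 11 (by norm_num) (by norm_num) (by norm_num) (by norm_num)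
    (by norm_num) S7 hS7 bn
  have h7 : (Nat.card {p : (n-1).Partition // p.parts.Nodup ∧ ∀ x ∈ p.parts,
      (x : ZMod 30) ∈ S7} : ℤ) = L7.coeff (n - 1) := by
    rw [h7a, ← cong_coeff h7ext le_rfl, h7w]
  rw [h13, h7, hfinal]

end

end Alladi

/-- Alladi's identity: for every positive odd integer `n`, `𝔔_7(n-1) = 𝔔_13(n)`. -/
theorem Qf7_shift_eq_Qf13_odd (n : ℕ) (hn : 0 < n) (hodd : Odd n) :
    Qf7 (n - 1) = Qf13 n := by
  have h := Alladi.main_coeff n hn hodd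
  unfold Qf7 Qf13 countRes
  exact_mod_cast h.symm
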